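/- For the union of two valid stub sets: if Ŝ_1 ⊆ S(V_{t_1}) and Ŝ_2 ⊆ S(V_{t_2}) are valid stub sets with Ŝ_1 ∩ S(X_t) = Ŝ_2 ∩ S(X_t) = S, and no edge of C joins a vertex of V_{t_1} \ X_t to a vertex of V_{t_2} \ X_t, then Ŝ_1 ∪ Ŝ_2 is a valid stub set and I(Ŝ_1 ∪ Ŝ_2) = I(Ŝ_1) + I(Ŝ_2) − I(S). -/

import Mathlib

open scoped Classical

/-- The stub pairs `(u, ℓ)` with `u ∈ A` and `ℓ` a candidate stub length of `u`. -/
noncomputable def stubPairs {V : Type*} (cand : V → Finset ℝ) (A : Finset V) :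
    Finset (V × ℝ) :=
  A.biUnion fun u => (cand u).image fun l => (u, l)

/-- A stub set over the vertex set `A` is valid if it contains exactly one candidate stub
pair per vertex of `A` and no two of its pairs intersect. -/
def ValidStubSet {V : Type*} (cand : V → Finset ℝ) (meets : V → ℝ → V → ℝ → Prop)
    (A : Finset V) (S : Finset (V × ℝ)) : Prop :=
  S ⊆ stubPairs cand A ∧ (∀ u ∈ A, ∃! l : ℝ, (u, l) ∈ S) ∧
  ∀ p ∈ S, ∀ q ∈ S, p.1 ≠ q.1 → ¬ meets p.1 p.2 q.1 q.2

/-- The ink of a stub set: the total stub length. -/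
noncomputable def inkOf {V : Type*} (S : Finset (V × ℝ)) : ℝ := ∑ p ∈ S, p.2

/-- The dynamic-programming table: `Wtab cand meets X Vt S` is the maximum ink of a valid
stub set `T` on `Vt` with `S ⊆ T` and `T ∩ S(X) = S` (and `⊥ = -∞` if none exists). -/
noncomputable def Wtab {V : Type*} (cand : V → Finset ℝ)
    (meets : V → ℝ → V → ℝ → Prop) (X Vt : Finset V) (S : Finset (V × ℝ)) : EReal :=
  sSup {x : EReal | ∃ T : Finset (V × ℝ), ValidStubSet cand meets Vt T ∧
    S ⊆ T ∧ T ∩ stubPairs cand X = S ∧ x = (inkOf T : EReal)}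


/-! The two stub sets agree on the common vertices `A ∩ B`, so the only pairs of `S₁ ∪ S₂` that
lie in neither `S₁` nor `S₂` are pairs `(u, a) ∈ S₁`, `(w, b) ∈ S₂` with `u ∈ A \ B` and
`w ∈ B \ A`; these cannot meet because `C` has no edge between `A \ B` and `B \ A`. The ink
identity is inclusion–exclusion, since `S₁ ∩ S₂ = S`. -/

open Finset

section StubSets

variable {V : Type*} {cand : V → Finset ℝ} {meets : V → ℝ → V → ℝ → Prop}
  {A B : Finset V} {S₁ S₂ : Finset (V × ℝ)}

lemma mem_stubPairs {p : V × ℝ} : p ∈ stubPairs cand A ↔ p.1 ∈ A ∧ p.2 ∈ cand p.1 := by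
  simp only [stubPairs, mem_biUnion, mem_image]
  constructor
  · rintro ⟨u, hu, l, hl, rfl⟩
    exact ⟨hu, hl⟩
  · exact fun ⟨hA, hc⟩ ↦ ⟨p.1, hA, p.2, hc, rfl⟩

variable [DecidableEq V]

lemma stubPairs_inter : stubPairs cand (A ∩ B) = stubPairs cand A ∩ stubPairs cand B := by
  ext p
  simp only [mem_inter, mem_stubPairs]
  tauto

lemma stubPairs_union : stubPairs cand (A ∪ B) = stubPairs cand A ∪ stubPairs cand B := by
  ext p
  simp only [mem_union, mem_stubPairs]
  tauto

lemma inter_stubPairs_inter_of_subset (h : S₁ ⊆ stubPairs cand A) :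
    S₁ ∩ stubPairs cand (A ∩ B) = S₁ ∩ stubPairs cand B := by
  rw [stubPairs_inter, ← inter_assoc, inter_eq_left.2 h]

lemma mem_of_agree {p : V × ℝ} (h₂ : S₂ ⊆ stubPairs cand B)
    (hagree : S₁ ∩ stubPairs cand B = S₂ ∩ stubPairs cand A) (hp : p ∈ S₂) (hpA : p.1 ∈ A) :
    p ∈ S₁ := by
  have : p ∈ S₂ ∩ stubPairs cand A :=
    mem_inter.2 ⟨hp, mem_stubPairs.2 ⟨hpA, (mem_stubPairs.1 (h₂ hp)).2⟩⟩
  rw [← hagree] at this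
  exact (mem_inter.1 this).1

lemma inter_eq_of_agree (h₂ : S₂ ⊆ stubPairs cand B)
    (hagree : S₁ ∩ stubPairs cand B = S₂ ∩ stubPairs cand A) :
    S₁ ∩ S₂ = S₁ ∩ stubPairs cand B := by
  refine Subset.antisymm (inter_subset_inter_left h₂) (subset_inter inter_subset_left ?_)
  rw [hagree]
  exact inter_subset_left

lemma inkOf_union_add_inkOf_inter (S₁ S₂ : Finset (V × ℝ)) :
    inkOf (S₁ ∪ S₂) + inkOf (S₁ ∩ S₂) = inkOf S₁ + inkOf S₂ :=
  sum_union_inter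

lemma ValidStubSet.existsUnique_union (h₁ : ValidStubSet cand meets A S₁)
    (h₂ : ValidStubSet cand meets B S₂)
    (hagree : S₁ ∩ stubPairs cand B = S₂ ∩ stubPairs cand A) :
    ∀ u ∈ A ∪ B, ∃! l : ℝ, (u, l) ∈ S₁ ∪ S₂ := by
  intro u hu
  rcases mem_union.1 hu with hu | hu
  · obtain ⟨l, hl, huniq⟩ := h₁.2.1 u hu
    refine ⟨l, mem_union_left _ hl, fun l' hl' ↦ huniq l' ?_⟩
    exact (mem_union.1 hl').elim id fun h ↦ mem_of_agree h₂.1 hagree h hu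
  · obtain ⟨l, hl, huniq⟩ := h₂.2.1 u hu
    refine ⟨l, mem_union_right _ hl, fun l' hl' ↦ huniq l' ?_⟩
    exact (mem_union.1 hl').elim (fun h ↦ mem_of_agree h₁.1 hagree.symm h hu) id

lemma ValidStubSet.not_meets_of_mem_of_mem (h₁ : ValidStubSet cand meets A S₁)
    (h₂ : ValidStubSet cand meets B S₂)
    (hagree : S₁ ∩ stubPairs cand B = S₂ ∩ stubPairs cand A)
    (hsep : ∀ u ∈ A \ B, ∀ w ∈ B \ A, ∀ a b, ¬ meets u a w b)
    {p q : V × ℝ} (hp : p ∈ S₁) (hq : q ∈ S₂) (hne : p.1 ≠ q.1) :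
    ¬ meets p.1 p.2 q.1 q.2 := by
  by_cases hpB : p.1 ∈ B
  · exact h₂.2.2 p (mem_of_agree h₁.1 hagree.symm hp hpB) q hq hne
  by_cases hqA : q.1 ∈ A
  · exact h₁.2.2 p hp q (mem_of_agree h₂.1 hagree hq hqA) hne
  exact hsep p.1 (mem_sdiff.2 ⟨(mem_stubPairs.1 (h₁.1 hp)).1, hpB⟩)
    q.1 (mem_sdiff.2 ⟨(mem_stubPairs.1 (h₂.1 hq)).1, hqA⟩) p.2 q.2

lemma ValidStubSet.union (h₁ : ValidStubSet cand meets A S₁) (h₂ : ValidStubSet cand meets B S₂)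
    (hsymm : ∀ u a w b, meets u a w b → meets w b u a)
    (hagree : S₁ ∩ stubPairs cand B = S₂ ∩ stubPairs cand A)
    (hsep : ∀ u ∈ A \ B, ∀ w ∈ B \ A, ∀ a b, ¬ meets u a w b) :
    ValidStubSet cand meets (A ∪ B) (S₁ ∪ S₂) := by
  refine ⟨stubPairs_union (cand := cand) ▸ union_subset_union h₁.1 h₂.1,
    h₁.existsUnique_union h₂ hagree, ?_⟩
  intro p hp q hq hne
  rcases mem_union.1 hp with hp | hp <;> rcases mem_union.1 hq with hq | hq
  · exact h₁.2.2 p hp q hq hne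
  · exact h₁.not_meets_of_mem_of_mem h₂ hagree hsep hp hq hne
  · exact fun hm ↦ h₁.not_meets_of_mem_of_mem h₂ hagree hsep hq hp hne.symm (hsymm _ _ _ _ hm)
  · exact h₂.2.2 p hp q hq hne

end StubSets

theorem stmt_11_general {V : Type*} [DecidableEq V] (C : SimpleGraph V)
    (cand : V → Finset ℝ)
    (meets : V → ℝ → V → ℝ → Prop)
    (meets_symm : ∀ u a w b, meets u a w b → meets w b u a)
    (meets_adj : ∀ u a w b, meets u a w b → C.Adj u w)
    (Xt Vt₁ Vt₂ : Finset V)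
    (hcap : Vt₁ ∩ Vt₂ = Xt)
    (hsep : ∀ u ∈ Vt₁ \ Xt, ∀ w ∈ Vt₂ \ Xt, ¬ C.Adj u w)
    (S₁ S₂ S : Finset (V × ℝ))
    (h₁ : ValidStubSet cand meets Vt₁ S₁) (h₂ : ValidStubSet cand meets Vt₂ S₂)
    (hS₁ : S₁ ∩ stubPairs cand Xt = S) (hS₂ : S₂ ∩ stubPairs cand Xt = S) :
    ValidStubSet cand meets (Vt₁ ∪ Vt₂) (S₁ ∪ S₂) ∧
    inkOf (S₁ ∪ S₂) = inkOf S₁ + inkOf S₂ - inkOf S := by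
  subst hcap
  rw [sdiff_inter_self_left, sdiff_inter_self_right] at hsep
  rw [inter_stubPairs_inter_of_subset h₁.1] at hS₁
  rw [inter_comm Vt₁, inter_stubPairs_inter_of_subset h₂.1] at hS₂
  have hagree : S₁ ∩ stubPairs cand Vt₂ = S₂ ∩ stubPairs cand Vt₁ := hS₁.trans hS₂.symm
  refine ⟨h₁.union h₂ meets_symm hagree fun u hu w hw a b hm ↦
    hsep u hu w hw (meets_adj u a w b hm), ?_⟩
  have hinter : S₁ ∩ S₂ = S := (inter_eq_of_agree h₂.1 hagree).trans hS₁
  have hink := inkOf_union_add_inkOf_inter S₁ S₂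
  rw [hinter] at hink
  linarith

/-- union of two valid stub sets.  If `S₁ ⊆ S(V_{t₁})` and `S₂ ⊆ S(V_{t₂})`
are valid stub sets with `S₁ ∩ S(X_t) = S₂ ∩ S(X_t) = S`, `V_{t₁} ∩ V_{t₂} = X_t`, stub
pairs can only intersect along edges of `C`, and no edge of `C` joins a vertex of
`V_{t₁} \ X_t` to a vertex of `V_{t₂} \ X_t`, then `S₁ ∪ S₂` is a valid stub set (over
`V_{t₁} ∪ V_{t₂}`) and `I(S₁ ∪ S₂) = I(S₁) + I(S₂) − I(S)`. -/
theorem stmt_11 {V : Type*} [DecidableEq V] (C : SimpleGraph V)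
    (cand : V → Finset ℝ)
    (meets : V → ℝ → V → ℝ → Prop)
    (meets_symm : ∀ u a w b, meets u a w b → meets w b u a)
    (meets_adj : ∀ u a w b, meets u a w b → C.Adj u w)
    (Xt Vt₁ Vt₂ : Finset V) (hX₁ : Xt ⊆ Vt₁) (hX₂ : Xt ⊆ Vt₂)
    (hcap : Vt₁ ∩ Vt₂ = Xt)
    (hsep : ∀ u ∈ Vt₁ \ Xt, ∀ w ∈ Vt₂ \ Xt, ¬ C.Adj u w)
    (S₁ S₂ S : Finset (V × ℝ))
    (h₁ : ValidStubSet cand meets Vt₁ S₁) (h₂ : ValidStubSet cand meets Vt₂ S₂)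
    (hS₁ : S₁ ∩ stubPairs cand Xt = S) (hS₂ : S₂ ∩ stubPairs cand Xt = S) :
    ValidStubSet cand meets (Vt₁ ∪ Vt₂) (S₁ ∪ S₂) ∧
    inkOf (S₁ ∪ S₂) = inkOf S₁ + inkOf S₂ - inkOf S :=
  stmt_11_general C cand meets meets_symm meets_adj Xt Vt₁ Vt₂ hcap hsep S₁ S₂ S h₁ h₂ hS₁ hS₂
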